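/- arXiv:2202.12425 — 6 statements merged into one kernel-verified Lean document; each statement's English description precedes it below -/
import Mathlib

section
/- Let R be an associative unital (not necessarily commutative) ring and let Q, K, L ∈ R satisfy Q·K + K·Q = L and K·L + L·K = 0. Then for every integer p ≥ 1 one has Q·K^p − (−1)^p·K^p·Q = p·(L·K^(p−1)); i.e. the graded commutator [Q, K^p] equals L times the formal derivative p·K^(p−1) of K^p. -/
/-- In an associative unital ring `R`, if `Q·K + K·Q = L` and
`K·L + L·K = 0`, then for every `p ≥ 1` the graded commutator
`Q·K^p − (−1)^p·K^p·Q` equals `p·(L·K^(p−1))`. -/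
theorem graded_commutator_Q_pow_K {R : Type*} [Ring R] (Q K L : R)
    (hQK : Q * K + K * Q = L) (hKL : K * L + L * K = 0) :
    ∀ p : ℕ, 1 ≤ p → Q * K ^ p - (-1 : R) ^ p * (K ^ p * Q) = (p : R) * (L * K ^ (p - 1)) := by
  have hcomm : ∀ p : ℕ, K ^ p * L = (-1 : R) ^ p * (L * K ^ p) := by
    intro p
    induction p with
    | zero => simp
    | succ n ih =>
      have h1 : K ^ (n+1) * L = K ^ n * (K * L) := by rw [pow_succ, mul_assoc]
      have hKL' : K * L = -(L * K) := eq_neg_of_add_eq_zero_left hKL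
      rw [h1, hKL', pow_succ, pow_succ, ← mul_assoc, ← mul_assoc]
      rw [mul_neg, ← mul_assoc, ih]
      noncomm_ring
  intro p
  induction p with
  | zero => intro h; omega
  | succ n ih =>
    intro _
    rcases Nat.eq_zero_or_pos n with rfl | hn
    · simp only [zero_add, pow_one, pow_zero, Nat.cast_one, mul_one, one_mul,
        Nat.sub_self]
      linear_combination (norm := noncomm_ring) hQK
    · obtain ⟨m, rfl⟩ := Nat.exists_eq_succ_of_ne_zero hn.ne'
      have ih' := ih (by omega)
      simp only [Nat.add_sub_cancel] at ih' ⊢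
      have hc := hcomm (m+1)
      have ha : (-1:R)^(m+1) * (-1:R)^(m+1) = 1 := by
        rw [← pow_add]; exact Even.neg_one_pow ⟨m+1, by ring⟩
      rw [pow_succ K (m+1), pow_succ (-1:R) (m+1)]
      rw [pow_succ K m] at ih' hc ⊢
      push_cast at ih' ⊢
      linear_combination (norm := noncomm_ring) ih' * K
        + ((-1:R)^(m+1) * (K^m*K)) * hQK + (-1:R)^(m+1) * hc + ha * (L*(K^m*K))
end

section
/- Let Q, K, L be ℚ-linear endomorphisms of a ℚ-vector space M satisfying the QK-algebra relations Q∘Q = 0, Q∘K + K∘Q = L, and K∘L + L∘K = 0. Let x ∈ M with Q x = 0, and define the standard K-sequence O^p := (1/p!)·K^p(x) for p ≥ 0. Then Q(O^p) = L(O^(p−1)) for every p ≥ 1; that is, the standard K-sequence is a descendant sequence (a solution of the topological descent equations). -/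
/-!
Since `Q K = L - K Q` and `K` anticommutes with `L`, moving `Q` to the right through `K ^ (n + 1)`
produces `n + 1` copies of `L K ^ n`, all with the same sign, and a term ending in `Q`, which
kills the `Q`-closed `x`. Hence `Q (K ^ (n + 1) x) = (n + 1) L (K ^ n x)`, and the factor `n + 1`
is exactly what `1 / (n + 1)!` turns into `1 / n!`.
-/

theorem mul_pow_succ_of_anticomm {R : Type*} [Ring R] {q k l : R}
    (hqk : q * k + k * q = l) (hkl : k * l + l * k = 0) (n : ℕ) :
    q * k ^ (n + 1) = (n + 1) • (l * k ^ n) + (-k) ^ (n + 1) * q := by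
  have hqk' : q * k = l + -k * q := by rw [← hqk, neg_mul, add_neg_cancel_right]
  have hkl' : -k * l = l * k := by rw [neg_mul, neg_eq_iff_add_eq_zero, hkl]
  induction n with
  | zero => simpa using hqk'
  | succ n ih =>
    calc q * k ^ (n + 2) = (l + -k * q) * k ^ (n + 1) := by rw [pow_succ', ← mul_assoc, hqk']
      _ = l * k ^ (n + 1) + -k * (q * k ^ (n + 1)) := by rw [add_mul, mul_assoc]
      _ = l * k ^ (n + 1) + (n + 1) • (-k * l * k ^ n) + (-k) ^ (n + 2) * q := by
        rw [ih, mul_add, mul_smul_comm, ← mul_assoc, ← mul_assoc, ← pow_succ', ← add_assoc]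
      _ = (n + 2) • (l * k ^ (n + 1)) + (-k) ^ (n + 2) * q := by
        rw [hkl', mul_assoc, ← pow_succ', ← succ_nsmul']

theorem LinearMap.apply_pow_succ_of_anticomm {M : Type*} [AddCommGroup M] [Module ℚ M]
    {Q K L : M →ₗ[ℚ] M} (hQK : Q ∘ₗ K + K ∘ₗ Q = L) (hKL : K ∘ₗ L + L ∘ₗ K = 0)
    {x : M} (hx : Q x = 0) (n : ℕ) :
    Q ((K ^ (n + 1)) x) = (n + 1) • L ((K ^ n) x) := by
  simpa [Module.End.mul_apply, hx, succ_nsmul] using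
    congr($(mul_pow_succ_of_anticomm (q := Q) hQK hKL n) x)

theorem standard_K_sequence_is_descendant_general {M : Type*} [AddCommGroup M] [Module ℚ M]
    (Q K L : M →ₗ[ℚ] M)
    (hQK : Q ∘ₗ K + K ∘ₗ Q = L) (hKL : K ∘ₗ L + L ∘ₗ K = 0)
    (x : M) (hx : Q x = 0)
    (O : ℕ → M) (hO : ∀ p : ℕ, O p = ((p.factorial : ℚ)⁻¹) • (K ^ p) x) :
    ∀ p : ℕ, 1 ≤ p → Q (O p) = L (O (p - 1)) := by
  intro p hp
  obtain ⟨n, rfl⟩ := Nat.exists_eq_add_of_le' hp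
  rw [Nat.add_sub_cancel, hO, hO, map_smul, map_smul,
    LinearMap.apply_pow_succ_of_anticomm hQK hKL hx, ← Nat.cast_smul_eq_nsmul ℚ, smul_smul]
  congr 1
  rw [Nat.factorial_succ]
  push_cast
  field_simp

/-- If `Q, K, L` are `ℚ`-linear endomorphisms of a `ℚ`-vector space `M`
with `Q∘Q = 0`, `Q∘K + K∘Q = L`, `K∘L + L∘K = 0`, and `Q x = 0`, then the standard
`K`-sequence `O^p = (1/p!)·K^p(x)` satisfies the descent equations
`Q(O^p) = L(O^(p−1))` for all `p ≥ 1`. -/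
theorem standard_K_sequence_is_descendant {M : Type*} [AddCommGroup M] [Module ℚ M]
    (Q K L : M →ₗ[ℚ] M)
    (hQQ : Q ∘ₗ Q = 0) (hQK : Q ∘ₗ K + K ∘ₗ Q = L) (hKL : K ∘ₗ L + L ∘ₗ K = 0)
    (x : M) (hx : Q x = 0)
    (O : ℕ → M) (hO : ∀ p : ℕ, O p = ((p.factorial : ℚ)⁻¹) • (K ^ p) x) :
    ∀ p : ℕ, 1 ≤ p → Q (O p) = L (O (p - 1)) :=
  standard_K_sequence_is_descendant_general Q K L hQK hKL x hx O hO
end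

section
/- Let Q, K, L be ℚ-linear endomorphisms of a ℚ-vector space M satisfying the QK-algebra relations Q∘Q = 0, Q∘K + K∘Q = L, and K∘L + L∘K = 0. Let n ∈ ℕ and let W^0, W^1, …, W^n ∈ M satisfy Q(W^q) = 0 for all 0 ≤ q ≤ n. Define the general K-sequence O^p := Σ_{q=0}^{p} (1/(p−q)!)·K^(p−q)(W^q) for 0 ≤ p ≤ n. Then Q(O^0) = 0 and Q(O^p) = L(O^(p−1)) for all 1 ≤ p ≤ n; that is, every general K-sequence is a descendant sequence. -/
/-!
Since `Q` commutes with `K` up to `L`, and `L` anticommutes with `K`, pushing `Q` through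
`K^(m+1)` on a `Q`-closed element produces `m + 1` copies of `L ∘ K^m`. Hence `Q` applied to
the term `K^(p-q) W^q / (p-q)!` of `O^p` is exactly `L` applied to the term
`K^(p-q-1) W^q / (p-q-1)!` of `O^(p-1)`, while the term `q = p` is killed by `Q`.
-/

open Finset

namespace LinearMap

variable {R M : Type*} [Semiring R] [AddCommGroup M] [Module R M]

theorem apply_pow_succ_of_map_eq_zero {Q K L : M →ₗ[R] M}
    (hQK : Q ∘ₗ K + K ∘ₗ Q = L) (hKL : K ∘ₗ L + L ∘ₗ K = 0) {x : M} (hx : Q x = 0) (m : ℕ) :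
    Q ((K ^ (m + 1)) x) = (m + 1) • L ((K ^ m) x) := by
  have hQK' : ∀ y, Q (K y) = L y - K (Q y) := fun y =>
    eq_sub_of_add_eq (by simpa using LinearMap.congr_fun hQK y)
  have hKL' : ∀ y, K (L y) = -L (K y) := fun y =>
    eq_neg_of_add_eq_zero_left (by simpa using LinearMap.congr_fun hKL y)
  induction m with
  | zero => simp [hQK', hx]
  | succ m ih =>
    have hpow : K ((K ^ m) x) = (K ^ (m + 1)) x := by rw [pow_succ', Module.End.mul_apply]
    rw [pow_succ', Module.End.mul_apply, hQK', ih, map_nsmul, hKL', hpow, smul_neg,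
      sub_neg_eq_add, succ_nsmul' _ (m + 1)]

end LinearMap

def kSequence {M : Type*} [AddCommGroup M] [Module ℚ M] (K : M →ₗ[ℚ] M) (W : ℕ → M) (p : ℕ) :
    M :=
  ∑ q ∈ range (p + 1), (((p - q).factorial : ℚ)⁻¹) • (K ^ (p - q)) (W q)

theorem inv_factorial_succ_smul_nsmul {M : Type*} [AddCommGroup M] [Module ℚ M] (n : ℕ) (y : M) :
    (((n + 1).factorial : ℚ)⁻¹) • (n + 1) • y = ((n.factorial : ℚ)⁻¹) • y := by
  rw [← Nat.cast_smul_eq_nsmul ℚ, smul_smul, Nat.factorial_succ]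
  push_cast
  rw [mul_inv, mul_right_comm, inv_mul_cancel₀ (by positivity), one_mul]

theorem map_kSequence_succ {M : Type*} [AddCommGroup M] [Module ℚ M] {Q K L : M →ₗ[ℚ] M}
    (hQK : Q ∘ₗ K + K ∘ₗ Q = L) (hKL : K ∘ₗ L + L ∘ₗ K = 0) {W : ℕ → M} {p : ℕ}
    (hW : ∀ q ≤ p + 1, Q (W q) = 0) :
    Q (kSequence K W (p + 1)) = L (kSequence K W p) := by
  rw [kSequence, sum_range_succ, map_add, Nat.sub_self, pow_zero, Module.End.one_apply,
    map_smul, hW _ le_rfl, smul_zero, add_zero, map_sum, kSequence, map_sum]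
  refine sum_congr rfl fun q hq => ?_
  have hqp : q ≤ p := Nat.lt_succ_iff.mp (mem_range.mp hq)
  rw [Nat.succ_sub hqp, map_smul, LinearMap.apply_pow_succ_of_map_eq_zero hQK hKL (hW q (by omega)),
    inv_factorial_succ_smul_nsmul, map_smul]

theorem general_K_sequence_is_descendant_general {M : Type*} [AddCommGroup M] [Module ℚ M]
    (Q K L : M →ₗ[ℚ] M)
    (hQK : Q ∘ₗ K + K ∘ₗ Q = L) (hKL : K ∘ₗ L + L ∘ₗ K = 0)
    (n : ℕ) (W : ℕ → M) (hW : ∀ q : ℕ, q ≤ n → Q (W q) = 0)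
    (O : ℕ → M)
    (hO : ∀ p : ℕ, p ≤ n →
      O p = ∑ q ∈ Finset.range (p + 1), (((p - q).factorial : ℚ)⁻¹) • (K ^ (p - q)) (W q)) :
    Q (O 0) = 0 ∧ ∀ p : ℕ, 1 ≤ p → p ≤ n → Q (O p) = L (O (p - 1)) := by
  constructor
  · simp [hO 0 n.zero_le, hW 0 n.zero_le]
  · rintro (_ | p) hp hpn
    · omega
    rw [hO _ hpn, hO _ (by omega), Nat.add_sub_cancel]
    exact map_kSequence_succ hQK hKL fun q hq => hW q (hq.trans hpn)

/-- If `Q, K, L` are `ℚ`-linear endomorphisms of a `ℚ`-vector space `M`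
with `Q∘Q = 0`, `Q∘K + K∘Q = L`, `K∘L + L∘K = 0`, and `W^0, …, W^n` are `Q`-closed, then
the general `K`-sequence `O^p = Σ_{q=0}^p (1/(p−q)!)·K^(p−q)(W^q)` satisfies
`Q(O^0) = 0` and `Q(O^p) = L(O^(p−1))` for `1 ≤ p ≤ n`. -/
theorem general_K_sequence_is_descendant {M : Type*} [AddCommGroup M] [Module ℚ M]
    (Q K L : M →ₗ[ℚ] M)
    (hQQ : Q ∘ₗ Q = 0) (hQK : Q ∘ₗ K + K ∘ₗ Q = L) (hKL : K ∘ₗ L + L ∘ₗ K = 0)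
    (n : ℕ) (W : ℕ → M) (hW : ∀ q : ℕ, q ≤ n → Q (W q) = 0)
    (O : ℕ → M)
    (hO : ∀ p : ℕ, p ≤ n →
      O p = ∑ q ∈ Finset.range (p + 1), (((p - q).factorial : ℚ)⁻¹) • (K ^ (p - q)) (W q)) :
    Q (O 0) = 0 ∧ ∀ p : ℕ, 1 ≤ p → p ≤ n → Q (O p) = L (O (p - 1)) :=
  general_K_sequence_is_descendant_general Q K L hQK hKL n W hW O hO
end

section
/- Let (Ω^{p,q}, Q, K, L) be a QK-bicomplex of length n, and let O^p ∈ Ω^{p,n−p} (0 ≤ p ≤ n) be a descendant sequence: Q(O^0) = 0 and Q(O^p) = L(O^(p−1)) for 1 ≤ p ≤ n. Then there exist elements W^q ∈ Ω^{q,n−q} with Q(W^q) = 0 for 0 ≤ q ≤ n, and elements ρ^p ∈ Ω^{p,n−p−1} for 0 ≤ p ≤ n, such that (with the convention ρ^(−1) = 0) O^p = Σ_{q=0}^{p} (1/(p−q)!)·K^(p−q)(W^q) + Q(ρ^p) + L(ρ^(p−1)) for every 0 ≤ p ≤ n. In other words, every descendant sequence is a K-sequence up to an exact sequence. -/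
set_option synthInstance.maxHeartbeats 1000000
set_option maxHeartbeats 1000000

/-- A QK-bicomplex of length `n`, encoded internally: an ambient `ℚ`-vector space `M`
carrying a bigrading by submodules `Ω p q` (vanishing unless `0 ≤ p ≤ n`), together with
operators `Q`, `K`, `L` of bidegrees `(0,1)`, `(1,−1)`, `(1,0)` satisfying the
QK-algebra relations `Q∘Q = 0`, `Q∘K + K∘Q = L`, `K∘L + L∘K = 0`. -/
structure QKBicomplex (n : ℕ) where
  M : Type*
  [grp : AddCommGroup M]
  [mod : Module ℚ M]
  Ω : ℤ → ℤ → Submodule ℚ M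
  Q : M →ₗ[ℚ] M
  K : M →ₗ[ℚ] M
  L : M →ₗ[ℚ] M
  vanish : ∀ p q : ℤ, (p < 0 ∨ (n : ℤ) < p) → Ω p q = ⊥
  memQ : ∀ p q : ℤ, ∀ x ∈ Ω p q, Q x ∈ Ω p (q + 1)
  memK : ∀ p q : ℤ, ∀ x ∈ Ω p q, K x ∈ Ω (p + 1) (q - 1)
  memL : ∀ p q : ℤ, ∀ x ∈ Ω p q, L x ∈ Ω (p + 1) q
  hQQ : Q ∘ₗ Q = 0
  hQK : Q ∘ₗ K + K ∘ₗ Q = L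
  hKL : K ∘ₗ L + L ∘ₗ K = 0

attribute [instance] QKBicomplex.grp QKBicomplex.mod

namespace QKAux

variable {n : ℕ} (C : QKBicomplex n)

lemma QK_apply (x : C.M) : C.Q (C.K x) = C.L x - C.K (C.Q x) := by
  have h := LinearMap.congr_fun C.hQK x
  simp only [LinearMap.add_apply, LinearMap.comp_apply] at h
  exact eq_sub_of_add_eq h

lemma KL_apply (x : C.M) : C.K (C.L x) = - C.L (C.K x) := by
  have h := LinearMap.congr_fun C.hKL x
  simp only [LinearMap.add_apply, LinearMap.comp_apply, LinearMap.zero_apply] at h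
  exact eq_neg_of_add_eq_zero_left h

/-- `Q (K^{m+1} x) = (m+1) • L (K^m x)` for `Q`-closed `x`. -/
lemma Q_Kpow_succ (x : C.M) (hx : C.Q x = 0) :
    ∀ m : ℕ, C.Q ((C.K ^ (m + 1)) x) = ((m : ℚ) + 1) • C.L ((C.K ^ m) x) := by
  intro m
  induction m with
  | zero => simp [QK_apply, hx]
  | succ m ih =>
      have h1 : (C.K ^ (m + 2)) x = C.K ((C.K ^ (m + 1)) x) := by
        rw [pow_succ' (C.K) (m + 1)]; rfl
      have h2 : (C.K ^ (m + 1)) x = C.K ((C.K ^ m) x) := by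
        rw [pow_succ' (C.K) m]; rfl
      rw [h1, QK_apply, ih, map_smul, KL_apply, smul_neg, sub_neg_eq_add, ← h2]
      push_cast
      module

/-- membership of `K^m x`. -/
lemma Kpow_mem (p q : ℤ) (x : C.M) (hx : x ∈ C.Ω p q) :
    ∀ m : ℕ, (C.K ^ m) x ∈ C.Ω (p + m) (q - m) := by
  intro m
  induction m with
  | zero => simpa using hx
  | succ m ih =>
      have h2 : (C.K ^ (m + 1)) x = C.K ((C.K ^ m) x) := by
        rw [pow_succ' (C.K) m]; rfl
      have := C.memK _ _ _ ih
      rw [h2]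
      have e1 : (p + (m : ℤ)) + 1 = p + ((m : ℕ) + 1 : ℕ) := by push_cast; ring
      have e2 : (q - (m : ℤ)) - 1 = q - ((m : ℕ) + 1 : ℕ) := by push_cast; ring
      rwa [e1, e2] at this

noncomputable def Wseq {n : ℕ} (C : QKBicomplex n) (O : ℕ → C.M) : ℕ → C.M
  | p => O p - ∑ q ∈ (Finset.range p).attach,
      (((p - q.1).factorial : ℚ)⁻¹) • (C.K ^ (p - q.1)) (Wseq C O q.1)
  termination_by p => p
  decreasing_by exact Finset.mem_range.mp q.2

lemma Wseq_eq (O : ℕ → C.M) (p : ℕ) :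
    Wseq C O p = O p - ∑ q ∈ Finset.range p,
      (((p - q).factorial : ℚ)⁻¹) • (C.K ^ (p - q)) (Wseq C O q) := by
  rw [Wseq]
  congr 1
  exact Finset.sum_attach (Finset.range p)
    (fun q => (((p - q).factorial : ℚ)⁻¹) • (C.K ^ (p - q)) (Wseq C O q))

/-- key identity: `O p` equals the `K`-sequence built from `Wseq`. -/
lemma O_eq (O : ℕ → C.M) (p : ℕ) :
    O p = ∑ q ∈ Finset.range (p + 1),
      (((p - q).factorial : ℚ)⁻¹) • (C.K ^ (p - q)) (Wseq C O q) := by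
  rw [Finset.sum_range_succ, Nat.sub_self]
  simp only [Nat.factorial_zero, Nat.cast_one, inv_one, pow_zero, Module.End.one_apply, one_smul]
  rw [Wseq_eq]
  abel

lemma fact_coef (k : ℕ) :
    ((k + 1).factorial : ℚ)⁻¹ * ((k : ℚ) + 1) = ((k.factorial : ℚ))⁻¹ := by
  rw [Nat.factorial_succ]
  push_cast
  rw [mul_inv]
  have h1 : ((k : ℚ) + 1) ≠ 0 := by positivity
  field_simp

lemma Q_Wseq (O : ℕ → C.M)
    (hO0 : C.Q (O 0) = 0)
    (hdesc : ∀ p : ℕ, 1 ≤ p → p ≤ n → C.Q (O p) = C.L (O (p - 1))) :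
    ∀ p : ℕ, p ≤ n → C.Q (Wseq C O p) = 0 := by
  intro p
  induction p using Nat.strong_induction_on with
  | _ p ih =>
    intro hpn
    match p with
    | 0 =>
        rw [Wseq_eq]
        simpa using hO0
    | (m + 1) =>
        rw [Wseq_eq, map_sub, map_sum]
        have hQO : C.Q (O (m + 1)) = C.L (O m) := by
          simpa using hdesc (m + 1) (by omega) hpn
        have hsum : ∀ q ∈ Finset.range (m + 1),
            C.Q ((((m + 1 - q).factorial : ℚ)⁻¹) • (C.K ^ (m + 1 - q)) (Wseq C O q))
            = (((m - q).factorial : ℚ)⁻¹) • C.L ((C.K ^ (m - q)) (Wseq C O q)) := by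
          intro q hq
          rw [Finset.mem_range] at hq
          have hqW : C.Q (Wseq C O q) = 0 := ih q (by omega) (by omega)
          have he : m + 1 - q = (m - q) + 1 := by omega
          rw [map_smul, he, Q_Kpow_succ C _ hqW (m - q), smul_smul]
          congr 1
          rw [fact_coef]
        rw [Finset.sum_congr rfl hsum, hQO]
        have : (∑ q ∈ Finset.range (m + 1),
            (((m - q).factorial : ℚ)⁻¹) • C.L ((C.K ^ (m - q)) (Wseq C O q)))
            = C.L (∑ q ∈ Finset.range (m + 1),
            (((m - q).factorial : ℚ)⁻¹) • (C.K ^ (m - q)) (Wseq C O q)) := by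
          rw [map_sum]
          exact Finset.sum_congr rfl fun q _ => (map_smul _ _ _).symm
        rw [this, ← map_sub, ← O_eq, sub_self, map_zero]

lemma Wseq_mem (O : ℕ → C.M)
    (hOmem : ∀ p : ℕ, p ≤ n → O p ∈ C.Ω p ((n : ℤ) - p)) :
    ∀ p : ℕ, p ≤ n → Wseq C O p ∈ C.Ω p ((n : ℤ) - p) := by
  intro p
  induction p using Nat.strong_induction_on with
  | _ p ih =>
    intro hpn
    rw [Wseq_eq]
    refine sub_mem (hOmem p hpn) (Submodule.sum_mem _ fun q hq => ?_)
    rw [Finset.mem_range] at hq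
    refine Submodule.smul_mem _ _ ?_
    have hW : Wseq C O q ∈ C.Ω q ((n : ℤ) - q) := ih q hq (by omega)
    have := Kpow_mem C q ((n : ℤ) - q) _ hW (p - q)
    have e1 : (q : ℤ) + ((p - q : ℕ) : ℤ) = (p : ℤ) := by omega
    have e2 : ((n : ℤ) - q) - ((p - q : ℕ) : ℤ) = (n : ℤ) - p := by omega
    rwa [e1, e2] at this

end QKAux

/-- **main theorem.** Every descendant sequence `O^p ∈ Ω^{p,n−p}`
(`Q O^0 = 0`, `Q O^p = L O^(p−1)`) is, up to an exact sequence, a `K`-sequence: there are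
`Q`-closed `W^q ∈ Ω^{q,n−q}` and elements `ρ^p ∈ Ω^{p,n−p−1}` (with `ρ^(−1) = 0`) such
that `O^p = Σ_{q=0}^p (1/(p−q)!)·K^(p−q)(W^q) + Q(ρ^p) + L(ρ^(p−1))` for `0 ≤ p ≤ n`. -/
theorem descendant_is_K_sequence_up_to_exact {n : ℕ} (C : QKBicomplex n)
    (O : ℕ → C.M)
    (hOmem : ∀ p : ℕ, p ≤ n → O p ∈ C.Ω p ((n : ℤ) - p))
    (hO0 : C.Q (O 0) = 0)
    (hdesc : ∀ p : ℕ, 1 ≤ p → p ≤ n → C.Q (O p) = C.L (O (p - 1))) :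
    ∃ (W ρ : ℕ → C.M),
      (∀ q : ℕ, q ≤ n → W q ∈ C.Ω q ((n : ℤ) - q) ∧ C.Q (W q) = 0) ∧
      (∀ p : ℕ, p ≤ n → ρ p ∈ C.Ω p ((n : ℤ) - p - 1)) ∧
      (O 0 = (∑ q ∈ Finset.range 1,
          (((0 - q).factorial : ℚ)⁻¹) • (C.K ^ (0 - q)) (W q)) + C.Q (ρ 0)) ∧
      (∀ p : ℕ, 1 ≤ p → p ≤ n →
        O p = (∑ q ∈ Finset.range (p + 1),
            (((p - q).factorial : ℚ)⁻¹) • (C.K ^ (p - q)) (W q))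
          + C.Q (ρ p) + C.L (ρ (p - 1))) := by
  refine ⟨QKAux.Wseq C O, fun _ => 0, ?_, ?_, ?_, ?_⟩
  · intro q hq
    exact ⟨QKAux.Wseq_mem C O hOmem q hq, QKAux.Q_Wseq C O hO0 hdesc q hq⟩
  · intro p _
    exact Submodule.zero_mem _
  · have := QKAux.O_eq C O 0
    simpa using this
  · intro p _ _
    have := QKAux.O_eq C O p
    simpa using this
end

section
/- Let M be a module over a ring, Λ an index set, and let Q, K, and for each λ ∈ Λ, ι_λ and δ_λ, be module endomorphisms of M. Set L := Q∘K + K∘Q. Assume for every λ ∈ Λ: (i) ι_λ∘Q + Q∘ι_λ = δ_λ; (ii) ι_λ∘K + K∘ι_λ = 0; (iii) δ_λ∘Q = Q∘δ_λ; and (iv) (h-simplicity) for every x ∈ M with ι_μ(x) = 0 for all μ ∈ Λ, one has (δ_λ∘K − K∘δ_λ)(x) = 0. Then, if f ∈ M is basic — i.e. ι_λ(f) = 0 and δ_λ(f) = 0 for all λ ∈ Λ — the elements Q(f), K(f), and L(f) are also basic. -/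
/-- Let `M` be a module carrying endomorphisms `Q`, `K`, contractions
`ι_a` and Lie derivatives `δ_a` (`a ∈ Λ`), with `L = Q∘K + K∘Q`, satisfying
`ι_a∘Q + Q∘ι_a = δ_a`, `ι_a∘K + K∘ι_a = 0`, `δ_a∘Q = Q∘δ_a`, and the h-simplicity
condition that `δ_a∘K − K∘δ_a` vanishes on horizontal elements.  Then `Q`, `K` and `L`
preserve basic elements. -/
theorem basic_preserved_by_QKL {R M : Type*} [Ring R] [AddCommGroup M] [Module R M]
    {Λ : Type*} (Q K : M →ₗ[R] M) (ι δ : Λ → M →ₗ[R] M) (L : M →ₗ[R] M)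
    (hL : L = Q ∘ₗ K + K ∘ₗ Q)
    (h1 : ∀ a : Λ, ι a ∘ₗ Q + Q ∘ₗ ι a = δ a)
    (h2 : ∀ a : Λ, ι a ∘ₗ K + K ∘ₗ ι a = 0)
    (h3 : ∀ a : Λ, δ a ∘ₗ Q = Q ∘ₗ δ a)
    (h4 : ∀ (a : Λ) (x : M), (∀ b : Λ, ι b x = 0) → (δ a ∘ₗ K - K ∘ₗ δ a) x = 0)
    (f : M) (hf1 : ∀ a : Λ, ι a f = 0) (hf2 : ∀ a : Λ, δ a f = 0) :
    (∀ a : Λ, ι a (Q f) = 0 ∧ δ a (Q f) = 0) ∧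
    (∀ a : Λ, ι a (K f) = 0 ∧ δ a (K f) = 0) ∧
    (∀ a : Λ, ι a (L f) = 0 ∧ δ a (L f) = 0) := by
  have hιQ : ∀ a : Λ, ι a (Q f) = 0 := by
    intro a
    have := congrArg (fun g => g f) (h1 a)
    simp [hf1 a, hf2 a] at this
    simpa using this
  have hδQ : ∀ a : Λ, δ a (Q f) = 0 := by
    intro a
    have := congrArg (fun g => g f) (h3 a)
    simp [hf2 a] at this
    simpa using this
  have hιK : ∀ a : Λ, ι a (K f) = 0 := by
    intro a
    have := congrArg (fun g => g f) (h2 a)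
    simp [hf1 a] at this
    simpa using this
  have hδK : ∀ a : Λ, δ a (K f) = 0 := by
    intro a
    have := h4 a f hf1
    simp [hf2 a] at this
    simpa using this
  have hδKQ : ∀ a : Λ, δ a (K (Q f)) = 0 := by
    intro a
    have := h4 a (Q f) hιQ
    simp [hδQ a] at this
    simpa using this
  refine ⟨fun a => ⟨hιQ a, hδQ a⟩, fun a => ⟨hιK a, hδK a⟩, fun a => ⟨?_, ?_⟩⟩
  · have hq := congrArg (fun g => g (K f)) (h1 a)
    simp [hιK a, hδK a] at hq
    have hk := congrArg (fun g => g (Q f)) (h2 a)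
    simp [hιQ a] at hk
    simp [hL, hq, hk]
  · have hq := congrArg (fun g => g (K f)) (h3 a)
    simp [hδK a] at hq
    simp [hL, ← hq, hδKQ a]
end

section
/- Let K_∞ be the associative unital ℚ-algebra generated by two elements Q and K subject to the relations Q·Q = 0 and K·(Q·K + K·Q) + (Q·K + K·Q)·K = 0 (i.e. the quotient of the free algebra ℚ⟨Q, K⟩ by the two-sided ideal generated by these two elements), and set L := Q·K + K·Q in K_∞. Then every element α ∈ K_∞ can be written uniquely in the form α = p₀(K) + p₁(K)·Q + p₂(K)·L + p₃(K)·Q·L, where p₀, p₁, p₂, p₃ are polynomials in K with rational coefficients; equivalently, the family {K^a, K^a·Q, K^a·L, K^a·Q·L : a ∈ ℕ} is a basis of K_∞ as a ℚ-vector space. -/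
noncomputable section

/-- The generator `Q` of the free algebra `ℚ⟨Q, K⟩`. -/
def Qf : FreeAlgebra ℚ (Fin 2) := FreeAlgebra.ι ℚ 0

/-- The generator `K` of the free algebra `ℚ⟨Q, K⟩`. -/
def Kf : FreeAlgebra ℚ (Fin 2) := FreeAlgebra.ι ℚ 1

/-- The element `L := Q·K + K·Q` of the free algebra `ℚ⟨Q, K⟩`. -/
def Lf : FreeAlgebra ℚ (Fin 2) := Qf * Kf + Kf * Qf

/-- The defining relations of the QK-algebra of length `∞`: `Q·Q = 0` and
`K·L + L·K = 0` where `L = Q·K + K·Q`. -/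
inductive QKRel : FreeAlgebra ℚ (Fin 2) → FreeAlgebra ℚ (Fin 2) → Prop
  | q : QKRel (Qf * Qf) 0
  | k : QKRel (Kf * Lf + Lf * Kf) 0

/-- The QK-algebra of length `∞`: the quotient of the free algebra `ℚ⟨Q, K⟩` by the
two-sided ideal generated by `Q·Q` and `K·L + L·K`. -/
abbrev KInfty : Type := RingQuot QKRel

/-- The image of `Q` in `K_∞`. -/
def Qgen : KInfty := RingQuot.mkAlgHom ℚ QKRel Qf

/-- The image of `K` in `K_∞`. -/
def Kgen : KInfty := RingQuot.mkAlgHom ℚ QKRel Kf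

/-- The image of `L = Q·K + K·Q` in `K_∞`. -/
def Lgen : KInfty := RingQuot.mkAlgHom ℚ QKRel Lf

abbrev MV : Type := (ℕ × Fin 4) →₀ ℚ

def ev (b : ℕ) (j : Fin 4) : MV := Finsupp.single (b, j) 1

def fQ : ℕ × Fin 4 → MV := fun p =>
  ![(-1 : ℚ) ^ p.1 • ev p.1 1 + ((-1 : ℚ) ^ (p.1 + 1) * p.1) • ev (p.1 - 1) 2,
    ((-1 : ℚ) ^ (p.1 + 1) * p.1) • ev (p.1 - 1) 3,
    (-1 : ℚ) ^ p.1 • ev p.1 3,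
    0] p.2

def fK : ℕ × Fin 4 → MV := fun p => ev (p.1 + 1) p.2

def qOp : MV →ₗ[ℚ] MV := Finsupp.lift MV ℚ (ℕ × Fin 4) fQ
def kOp : MV →ₗ[ℚ] MV := Finsupp.lift MV ℚ (ℕ × Fin 4) fK

lemma qOp_single (p : ℕ × Fin 4) (c : ℚ) : qOp (Finsupp.single p c) = c • fQ p := by
  simp [qOp, Finsupp.lift_apply, Finsupp.sum_single_index]

lemma kOp_single (p : ℕ × Fin 4) (c : ℚ) : kOp (Finsupp.single p c) = c • fK p := by
  simp [kOp, Finsupp.lift_apply, Finsupp.sum_single_index]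

lemma fQ0 (b : ℕ) :
    fQ (b, 0) = (-1 : ℚ) ^ b • ev b 1 + ((-1 : ℚ) ^ (b + 1) * b) • ev (b - 1) 2 := rfl
lemma fQ1 (b : ℕ) : fQ (b, 1) = ((-1 : ℚ) ^ (b + 1) * b) • ev (b - 1) 3 := rfl
lemma fQ2 (b : ℕ) : fQ (b, 2) = (-1 : ℚ) ^ b • ev b 3 := rfl
lemma fQ3 (b : ℕ) : fQ (b, 3) = 0 := rfl

lemma qOp_ev (b : ℕ) (j : Fin 4) : qOp (ev b j) = fQ (b, j) := by
  simp [ev, qOp_single]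

lemma kOp_ev (b : ℕ) (j : Fin 4) : kOp (ev b j) = ev (b + 1) j := by
  simp [ev, kOp_single, fK]

lemma qq_op : qOp ∘ₗ qOp = 0 := by
  apply Finsupp.lhom_ext
  rintro ⟨b, j⟩ c
  simp only [LinearMap.comp_apply, qOp_single, map_smul, LinearMap.zero_apply]
  fin_cases j
  · show c • qOp (fQ (b, 0)) = 0
    rw [fQ0]
    rcases b with _ | n
    · simp [qOp_ev, fQ1, fQ2]
    · rw [map_add, map_smul, map_smul, qOp_ev, qOp_ev, fQ1, fQ2, Nat.add_sub_cancel,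
        smul_smul, smul_smul, ← add_smul]
      push_cast
      have : ((-1 : ℚ) ^ (n+1) * ((-1) ^ (n + 1 + 1) * (n + 1)) +
          (-1 : ℚ) ^ (n + 1 + 1) * (n + 1) * (-1) ^ n) = 0 := by ring
      rw [this, zero_smul, smul_zero]
  · show c • qOp (fQ (b, 1)) = 0
    rw [fQ1]
    rcases b with _ | n
    · simp
    · rw [map_smul, Nat.add_sub_cancel, qOp_ev, fQ3, smul_zero, smul_zero]
  · show c • qOp (fQ (b, 2)) = 0
    rw [fQ2, map_smul, qOp_ev, fQ3, smul_zero, smul_zero]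
  · show c • qOp (fQ (b, 3)) = 0
    rw [fQ3, map_zero, smul_zero]

def lOp : MV →ₗ[ℚ] MV := qOp ∘ₗ kOp + kOp ∘ₗ qOp

lemma lOp_ev0 (b : ℕ) : lOp (ev b 0) = (-1 : ℚ) ^ b • ev b 2 := by
  rw [lOp]
  simp only [LinearMap.add_apply, LinearMap.comp_apply, kOp_ev, qOp_ev, fQ0, map_add, map_smul,
    kOp_ev]
  rcases b with _ | n
  · simp [ev]
  · push_cast
    module

lemma lOp_ev1 (b : ℕ) : lOp (ev b 1) = (-1 : ℚ) ^ b • ev b 3 := by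
  rw [lOp]
  simp only [LinearMap.add_apply, LinearMap.comp_apply, kOp_ev, qOp_ev, fQ1, map_smul, kOp_ev]
  rcases b with _ | n
  · simp [ev]
  · push_cast
    module

lemma lOp_ev2 (b : ℕ) : lOp (ev b 2) = 0 := by
  rw [lOp]
  simp only [LinearMap.add_apply, LinearMap.comp_apply, kOp_ev, qOp_ev, fQ2, map_smul, kOp_ev]
  module

lemma lOp_ev3 (b : ℕ) : lOp (ev b 3) = 0 := by
  rw [lOp]
  simp only [LinearMap.add_apply, LinearMap.comp_apply, kOp_ev, qOp_ev, fQ3, map_smul, kOp_ev,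
    map_zero, smul_zero, add_zero, zero_add]

lemma klk_op : kOp ∘ₗ lOp + lOp ∘ₗ kOp = 0 := by
  apply Finsupp.lhom_ext
  rintro ⟨b, j⟩ c
  have hs : (Finsupp.single (b, j) c : MV) = c • ev b j := by
    simp [ev, Finsupp.smul_single]
  simp only [LinearMap.add_apply, LinearMap.comp_apply, LinearMap.zero_apply, hs, map_smul]
  fin_cases j
  · show c • (kOp (lOp (ev b 0)) + lOp (kOp (ev b 0))) = c • 0
    rw [lOp_ev0, kOp_ev, map_smul, kOp_ev, lOp_ev0]
    module
  · show c • (kOp (lOp (ev b 1)) + lOp (kOp (ev b 1))) = c • 0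
    rw [lOp_ev1, kOp_ev, map_smul, kOp_ev, lOp_ev1]
    module
  · show c • (kOp (lOp (ev b 2)) + lOp (kOp (ev b 2))) = c • 0
    rw [lOp_ev2, kOp_ev, lOp_ev2]
    simp
  · show c • (kOp (lOp (ev b 3)) + lOp (kOp (ev b 3))) = c • 0
    rw [lOp_ev3, kOp_ev, lOp_ev3]
    simp

def phi0 : FreeAlgebra ℚ (Fin 2) →ₐ[ℚ] Module.End ℚ MV :=
  FreeAlgebra.lift ℚ ![qOp, kOp]

lemma phi0_Qf : phi0 Qf = qOp := by
  simp [phi0, Qf, FreeAlgebra.lift_ι_apply]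

lemma phi0_Kf : phi0 Kf = kOp := by
  simp [phi0, Kf, FreeAlgebra.lift_ι_apply]

lemma phi0_rel : ∀ ⦃x y⦄, QKRel x y → phi0 x = phi0 y := by
  intro x y h
  cases h with
  | q =>
    simp only [map_mul, map_zero, phi0_Qf]
    exact qq_op
  | k =>
    simp only [map_mul, map_add, map_zero, phi0_Qf, phi0_Kf, Lf]
    have := klk_op
    rw [lOp] at this
    exact this

def phi : KInfty →ₐ[ℚ] Module.End ℚ MV :=
  RingQuot.liftAlgHom ℚ ⟨phi0, phi0_rel⟩

lemma phi_Qgen : phi Qgen = qOp := by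
  rw [Qgen, phi, RingQuot.liftAlgHom_mkAlgHom_apply, phi0_Qf]

lemma phi_Kgen : phi Kgen = kOp := by
  rw [Kgen, phi, RingQuot.liftAlgHom_mkAlgHom_apply, phi0_Kf]

lemma phi_Lgen : phi Lgen = lOp := by
  rw [Lgen, phi, RingQuot.liftAlgHom_mkAlgHom_apply, Lf, lOp]
  simp only [map_add, map_mul, phi0_Qf, phi0_Kf]
  rfl

lemma kOp_pow_ev (a b : ℕ) (j : Fin 4) : (kOp ^ a) (ev b j) = ev (b + a) j := by
  induction a with
  | zero => rfl
  | succ n ih =>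
    rw [pow_succ']
    show kOp ((kOp ^ n) (ev b j)) = ev (b + (n + 1)) j
    rw [ih, kOp_ev, Nat.add_assoc]

def Tmap : KInfty →ₗ[ℚ] MV := (LinearMap.applyₗ (ev 0 0)).comp phi.toLinearMap

lemma Tmap_family (x : ℕ × Fin 4) :
    Tmap (Kgen ^ x.1 * ![1, Qgen, Lgen, Qgen * Lgen] x.2) = Finsupp.single x 1 := by
  obtain ⟨a, j⟩ := x
  have hpow : phi (Kgen ^ a) = kOp ^ a := by rw [map_pow, phi_Kgen]
  fin_cases j
  · show Tmap (Kgen ^ a * 1) = Finsupp.single (a, 0) 1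
    rw [mul_one]
    show phi (Kgen ^ a) (ev 0 0) = _
    rw [hpow, kOp_pow_ev, zero_add]
    rfl
  · show Tmap (Kgen ^ a * Qgen) = Finsupp.single (a, 1) 1
    show phi (Kgen ^ a * Qgen) (ev 0 0) = _
    rw [map_mul, hpow, phi_Qgen]
    rw [Module.End.mul_apply, qOp_ev, fQ0]
    rw [map_add, map_smul, map_smul, kOp_pow_ev, kOp_pow_ev]
    simp [ev, Finsupp.smul_single]
  · show Tmap (Kgen ^ a * Lgen) = Finsupp.single (a, 2) 1
    show phi (Kgen ^ a * Lgen) (ev 0 0) = _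
    rw [map_mul, hpow, phi_Lgen, Module.End.mul_apply, lOp_ev0]
    rw [map_smul, kOp_pow_ev]
    simp [ev, Finsupp.smul_single]
  · show Tmap (Kgen ^ a * (Qgen * Lgen)) = Finsupp.single (a, 3) 1
    show phi (Kgen ^ a * (Qgen * Lgen)) (ev 0 0) = _
    rw [map_mul, map_mul, hpow, phi_Qgen, phi_Lgen]
    rw [Module.End.mul_apply, Module.End.mul_apply, lOp_ev0, map_smul, qOp_ev, fQ2]
    rw [map_smul, map_smul, kOp_pow_ev]
    simp [ev, Finsupp.smul_single]


lemma L_def : Lgen = Qgen * Kgen + Kgen * Qgen := by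
  rw [Lgen, Lf, map_add, map_mul, map_mul]; rfl

lemma qq : Qgen * Qgen = 0 := by
  have h := RingQuot.mkAlgHom_rel ℚ QKRel.q
  rw [map_mul, map_zero] at h
  exact h

lemma klk : Kgen * Lgen + Lgen * Kgen = 0 := by
  have h := RingQuot.mkAlgHom_rel ℚ QKRel.k
  rw [map_add, map_mul, map_mul, map_zero] at h
  exact h

lemma kl' : Kgen * Lgen = (-1 : ℚ) • (Lgen * Kgen) := by
  calc Kgen * Lgen = (Kgen * Lgen + Lgen * Kgen) + (-1 : ℚ) • (Lgen * Kgen) := by module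
    _ = (-1 : ℚ) • (Lgen * Kgen) := by rw [klk, zero_add]

lemma lk' : Lgen * Kgen = (-1 : ℚ) • (Kgen * Lgen) := by
  calc Lgen * Kgen = (Kgen * Lgen + Lgen * Kgen) + (-1 : ℚ) • (Kgen * Lgen) := by module
    _ = (-1 : ℚ) • (Kgen * Lgen) := by rw [klk, zero_add]

lemma ql_comm : Qgen * Lgen = Lgen * Qgen := by
  rw [L_def, mul_add, add_mul, ← mul_assoc Qgen Qgen Kgen, qq, zero_mul, zero_add,
    mul_assoc Kgen Qgen Qgen, qq, mul_zero, add_zero, mul_assoc]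

lemma ll : Lgen * Lgen = 0 := by
  have e1 : Lgen * Lgen = Qgen * (Kgen * Lgen) + Kgen * (Qgen * Lgen) := by
    nth_rewrite 1 [L_def]
    rw [add_mul, mul_assoc, mul_assoc]
  have e2 : Qgen * (Kgen * Lgen) = (-1 : ℚ) • (Lgen * (Qgen * Kgen)) := by
    calc Qgen * (Kgen * Lgen) = Qgen * ((-1 : ℚ) • (Lgen * Kgen)) := by rw [kl']
      _ = (-1 : ℚ) • (Qgen * (Lgen * Kgen)) := mul_smul_comm _ _ _
      _ = (-1 : ℚ) • (Qgen * Lgen * Kgen) := by rw [mul_assoc]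
      _ = (-1 : ℚ) • (Lgen * Qgen * Kgen) := by rw [ql_comm]
      _ = (-1 : ℚ) • (Lgen * (Qgen * Kgen)) := by rw [mul_assoc]
  have e3 : Kgen * (Qgen * Lgen) = (-1 : ℚ) • (Lgen * (Kgen * Qgen)) := by
    calc Kgen * (Qgen * Lgen) = Kgen * (Lgen * Qgen) := by rw [ql_comm]
      _ = Kgen * Lgen * Qgen := by rw [mul_assoc]
      _ = ((-1 : ℚ) • (Lgen * Kgen)) * Qgen := by rw [kl']
      _ = (-1 : ℚ) • (Lgen * (Kgen * Qgen)) := by rw [smul_mul_assoc, mul_assoc]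
  have h2 : Lgen * Lgen = (-1 : ℚ) • (Lgen * Lgen) := calc
    Lgen * Lgen = Qgen * (Kgen * Lgen) + Kgen * (Qgen * Lgen) := e1
    _ = (-1 : ℚ) • (Lgen * (Qgen * Kgen)) + (-1 : ℚ) • (Lgen * (Kgen * Qgen)) := by
        rw [e2, e3]
    _ = (-1 : ℚ) • (Lgen * (Qgen * Kgen + Kgen * Qgen)) := by rw [← smul_add, ← mul_add]
    _ = (-1 : ℚ) • (Lgen * Lgen) := by rw [← L_def]
  have h5 : Lgen * Lgen + Lgen * Lgen = 0 := by
    nth_rewrite 2 [h2]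
    module
  have h6 : Lgen * Lgen = (1/2 : ℚ) • (Lgen * Lgen + Lgen * Lgen) := by module
  rw [h6, h5, smul_zero]

lemma qk : Qgen * Kgen = Lgen + (-1 : ℚ) • (Kgen * Qgen) := by
  calc Qgen * Kgen = (Qgen * Kgen + Kgen * Qgen) + (-1 : ℚ) • (Kgen * Qgen) := by module
    _ = Lgen + (-1 : ℚ) • (Kgen * Qgen) := by rw [← L_def]

lemma qql : Qgen * (Qgen * Lgen) = 0 := by rw [← mul_assoc, qq, zero_mul]

lemma lql : Lgen * (Qgen * Lgen) = 0 := by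
  rw [← mul_assoc, ← ql_comm, mul_assoc, ll, mul_zero]

lemma cQK (a : ℕ) : Qgen * Kgen ^ (a + 1) =
    ((-1 : ℚ) ^ (a + 1)) • (Kgen ^ (a + 1) * Qgen) +
      ((-1 : ℚ) ^ a * (a + 1 : ℕ)) • (Kgen ^ a * Lgen) := by
  induction a with
  | zero =>
    simp only [zero_add, pow_one, pow_zero, one_mul, Nat.cast_one, mul_one]
    rw [qk]
    module
  | succ n ih =>
    rw [pow_succ Kgen (n + 1), ← mul_assoc, ih, add_mul, smul_mul_assoc, smul_mul_assoc,
      mul_assoc (Kgen ^ (n + 1)) Qgen Kgen, qk, mul_assoc (Kgen ^ n) Lgen Kgen, lk',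
      mul_add (Kgen ^ (n + 1)), mul_smul_comm, mul_smul_comm,
      ← mul_assoc (Kgen ^ (n + 1)) Kgen Qgen, ← pow_succ,
      ← mul_assoc (Kgen ^ n) Kgen Lgen, ← pow_succ]
    push_cast
    module

def fam : ℕ × Fin 4 → KInfty := fun x => Kgen ^ x.1 * ![1, Qgen, Lgen, Qgen * Lgen] x.2

def P : Submodule ℚ KInfty := Submodule.span ℚ (Set.range fam)

lemma mem_P (a : ℕ) (j : Fin 4) : Kgen ^ a * ![1, Qgen, Lgen, Qgen * Lgen] j ∈ P :=
  Submodule.subset_span ⟨(a, j), rfl⟩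

lemma K_mem_P (a : ℕ) : Kgen ^ a ∈ P := by
  have := mem_P a 0
  rwa [show (![1, Qgen, Lgen, Qgen * Lgen] 0 : KInfty) = 1 from rfl, mul_one] at this

lemma KQ_mem_P (a : ℕ) : Kgen ^ a * Qgen ∈ P := mem_P a 1

lemma KL_mem_P (a : ℕ) : Kgen ^ a * Lgen ∈ P := mem_P a 2

lemma KQL_mem_P (a : ℕ) : Kgen ^ a * (Qgen * Lgen) ∈ P := mem_P a 3

lemma Q_mul_fam_mem (x : ℕ × Fin 4) : Qgen * fam x ∈ P := by
  obtain ⟨a, j⟩ := x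
  rcases a with _ | n
  · fin_cases j
    · show Qgen * (Kgen ^ 0 * 1) ∈ P
      rw [pow_zero, one_mul, mul_one]
      simpa using KQ_mem_P 0
    · show Qgen * (Kgen ^ 0 * Qgen) ∈ P
      rw [pow_zero, one_mul, qq]
      exact zero_mem P
    · show Qgen * (Kgen ^ 0 * Lgen) ∈ P
      rw [pow_zero, one_mul]
      simpa using KQL_mem_P 0
    · show Qgen * (Kgen ^ 0 * (Qgen * Lgen)) ∈ P
      rw [pow_zero, one_mul, qql]
      exact zero_mem P
  · have key : ∀ w : KInfty, Qgen * (Kgen ^ (n + 1) * w) =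
        ((-1 : ℚ) ^ (n + 1)) • (Kgen ^ (n + 1) * (Qgen * w)) +
          ((-1 : ℚ) ^ n * (n + 1 : ℕ)) • (Kgen ^ n * (Lgen * w)) := by
      intro w
      rw [← mul_assoc, cQK, add_mul, smul_mul_assoc, smul_mul_assoc, mul_assoc, mul_assoc]
    fin_cases j
    · show Qgen * (Kgen ^ (n + 1) * 1) ∈ P
      rw [key]
      exact add_mem (Submodule.smul_mem P _ (by rw [mul_one]; exact KQ_mem_P _))
        (Submodule.smul_mem P _ (by rw [mul_one]; exact KL_mem_P _))
    · show Qgen * (Kgen ^ (n + 1) * Qgen) ∈ P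
      rw [key]
      exact add_mem (Submodule.smul_mem P _ (by rw [qq, mul_zero]; exact zero_mem P))
        (Submodule.smul_mem P _ (by rw [← ql_comm]; exact KQL_mem_P _))
    · show Qgen * (Kgen ^ (n + 1) * Lgen) ∈ P
      rw [key]
      exact add_mem (Submodule.smul_mem P _ (KQL_mem_P _))
        (Submodule.smul_mem P _ (by rw [ll, mul_zero]; exact zero_mem P))
    · show Qgen * (Kgen ^ (n + 1) * (Qgen * Lgen)) ∈ P
      rw [key]
      exact add_mem (Submodule.smul_mem P _ (by rw [qql, mul_zero]; exact zero_mem P))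
        (Submodule.smul_mem P _ (by rw [lql, mul_zero]; exact zero_mem P))

lemma Q_mul_mem {x : KInfty} (hx : x ∈ P) : Qgen * x ∈ P := by
  induction hx using Submodule.span_induction with
  | mem y hy => obtain ⟨p, rfl⟩ := hy; exact Q_mul_fam_mem p
  | zero => rw [mul_zero]; exact zero_mem P
  | add y z _ _ hy hz => rw [mul_add]; exact add_mem hy hz
  | smul c y _ hy => rw [mul_smul_comm]; exact Submodule.smul_mem P c hy

lemma K_mul_fam_mem (x : ℕ × Fin 4) : Kgen * fam x ∈ P := by
  obtain ⟨a, j⟩ := x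
  have : Kgen * fam (a, j) = fam (a + 1, j) := by
    show Kgen * (Kgen ^ a * _) = Kgen ^ (a + 1) * _
    rw [← mul_assoc, ← pow_succ']
  rw [this]
  exact Submodule.subset_span ⟨(a + 1, j), rfl⟩

lemma K_mul_mem {x : KInfty} (hx : x ∈ P) : Kgen * x ∈ P := by
  induction hx using Submodule.span_induction with
  | mem y hy => obtain ⟨p, rfl⟩ := hy; exact K_mul_fam_mem p
  | zero => rw [mul_zero]; exact zero_mem P
  | add y z _ _ hy hz => rw [mul_add]; exact add_mem hy hz
  | smul c y _ hy => rw [mul_smul_comm]; exact Submodule.smul_mem P c hy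

def W : Subalgebra ℚ KInfty where
  carrier := {x | ∀ y ∈ P, x * y ∈ P}
  mul_mem' := by
    intro x y hx hy z hz
    rw [mul_assoc]
    exact hx _ (hy _ hz)
  one_mem' := by
    intro z hz
    rwa [one_mul]
  add_mem' := by
    intro x y hx hy z hz
    rw [add_mul]
    exact add_mem (hx z hz) (hy z hz)
  algebraMap_mem' := by
    intro r z hz
    rw [Algebra.algebraMap_eq_smul_one, smul_mul_assoc, one_mul]
    exact Submodule.smul_mem P r hz

lemma all_mem_W (x : KInfty) : x ∈ W := by
  obtain ⟨y, rfl⟩ := RingQuot.mkAlgHom_surjective ℚ QKRel x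
  induction y using FreeAlgebra.induction with
  | grade0 r => exact (RingQuot.mkAlgHom ℚ QKRel).commutes r ▸ W.algebraMap_mem r
  | grade1 i =>
    fin_cases i
    · exact fun z hz => Q_mul_mem hz
    · exact fun z hz => K_mul_mem hz
  | mul a b ha hb => rw [map_mul]; exact W.mul_mem ha hb
  | add a b ha hb => rw [map_add]; exact W.add_mem ha hb

lemma one_mem_P : (1 : KInfty) ∈ P := by
  simpa using K_mem_P 0

lemma P_top : P = ⊤ := by
  rw [eq_top_iff]
  intro x _
  have := all_mem_W x 1 one_mem_P
  rwa [mul_one] at this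

/-- **PBW for `K_∞`.** Every element of `K_∞` is uniquely of the form
`p₀(K) + p₁(K)·Q + p₂(K)·L + p₃(K)·Q·L` with `pᵢ` rational polynomials; equivalently,
the family `{K^a, K^a·Q, K^a·L, K^a·Q·L : a ∈ ℕ}` is a `ℚ`-basis of `K_∞`. -/
theorem KInfty_word_basis :
    LinearIndependent ℚ
      (fun x : ℕ × Fin 4 => Kgen ^ x.1 * ![1, Qgen, Lgen, Qgen * Lgen] x.2) ∧
    Submodule.span ℚ
      (Set.range (fun x : ℕ × Fin 4 => Kgen ^ x.1 * ![1, Qgen, Lgen, Qgen * Lgen] x.2)) =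
        ⊤ := by
  constructor
  · apply LinearIndependent.of_comp Tmap
    have hcomp : ⇑Tmap ∘ (fun x : ℕ × Fin 4 => Kgen ^ x.1 * ![1, Qgen, Lgen, Qgen * Lgen] x.2)
        = fun x : ℕ × Fin 4 => Finsupp.single x (1 : ℚ) := by
      funext x
      exact Tmap_family x
    rw [hcomp, ← Finsupp.coe_basisSingleOne (R := ℚ) (ι := ℕ × Fin 4)]
    exact Finsupp.basisSingleOne.linearIndependent
  · exact P_top

end
end
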